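/- Decompose the differential of Anderson's resolution as d = d_1 + d_2 where d_{1,x}[a,y] = −ω(x,y) N_{z(x)}[z(x)a, y/x] and d_{2,x}[a,y] = ω(x,y) p(x;Fr_x^{-1})[a, y/x], with d_i = ∑_{x|y} d_{i,x}. Then d_1² = d_2² = d_1 d_2 + d_2 d_1 = 0, so (ℒ_z; d_1, d_2) is a double complex, and each d_{i,x} commutes with the G_z-action. -/

import Mathlib

/-! Universal norm distribution scaffold.  The finite element `z` has prime set `ι`
(totally ordered), multiplicities recorded only through the finite abelian groups
`G x = G_{z(x)}`; `G_z = ∏_{x|z} G_{z(x)}`.  A basis symbol `[g z']` of `𝒜_z` is a pair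
of a stalk (a subset `S ⊆ ι`) and a group element `g ∈ G_{z'} = ∏_{x∈S} G x`, encoded
as a function on all of `ι` which is trivial outside `S`. -/

/-- Basis symbols `[g z']` of `𝒜_z`. -/
def UndIdx (ι : Type) (G : ι → Type) [∀ i, CommGroup (G i)] : Type :=
  {q : Finset ι × (∀ i, G i) // ∀ i ∉ q.1, q.2 i = 1}

section
variable (ι : Type) [Fintype ι] [LinearOrder ι]
  (G : ι → Type) [∀ i, CommGroup (G i)] [∀ i, Fintype (G i)]

/-- Action of `σ ∈ G_z` on a symbol `[g z']`: multiply the components in the stalk. -/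
def undAct (σ : ∀ i, G i) (q : UndIdx ι G) : UndIdx ι G :=
  ⟨(q.1.1, fun i => if i ∈ q.1.1 then σ i * q.1.2 i else 1), fun _ hi => if_neg hi⟩

/-- The symbol `[g h z(x) z']` obtained from `[g z']` by extending the stalk by `z(x)`
with component `h ∈ G_{z(x)}`. -/
def undExt (x : ι) (h : G x) (q : UndIdx ι G) : UndIdx ι G :=
  ⟨(insert x q.1.1, Function.update q.1.2 x h), by
    intro i hi
    have hix : i ≠ x := fun e => hi (e ▸ Finset.mem_insert_self x q.1.1)
    show Function.update q.1.2 x h i = 1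
    rw [Function.update_of_ne hix]
    exact q.2 i fun hm => hi (Finset.mem_insert_of_mem hm)⟩

variable (𝒯 : Type) [CommRing 𝒯] (p : ι → Polynomial 𝒯) (fr : ι → ∀ i, G i)

/-- The distribution relation `λ_{z(x)}([g z']) = p(x; Fr_x^{-1})[g z'] − N_{z(x)}[g z(x) z']`
(for `x` not dividing the stalk `z'`), as an element of the free module `𝒜_z`. -/
noncomputable def undLam (x : ι) (q : UndIdx ι G) : UndIdx ι G →₀ 𝒯 :=
  (∑ k ∈ (p x).support,
      Finsupp.single (undAct ι G (fun i => (fr x i)⁻¹ ^ k) q) ((p x).coeff k))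
    - ∑ h : G x, Finsupp.single (undExt ι G x h q) 1

/-- The `𝒯[G_z]`-submodule `𝒟_z` of distribution relations: the `𝒯`-span of all
`G_z`-translates of the `λ_{z(x)}([g z'])`, `x ∤ z'`. -/
noncomputable def undRel : Submodule 𝒯 (UndIdx ι G →₀ 𝒯) :=
  Submodule.span 𝒯
    {v | ∃ (σ : ∀ i, G i) (x : ι) (q : UndIdx ι G), x ∉ q.1.1 ∧
      v = Finsupp.mapDomain (undAct ι G σ) (undLam ι G 𝒯 p fr x q)}

/-- The universal norm distribution `𝒰_z = 𝒜_z/𝒟_z`. -/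
noncomputable abbrev UND : Type := (UndIdx ι G →₀ 𝒯) ⧸ undRel ι G 𝒯 p fr

end

section
variable (ι : Type) [Fintype ι] [LinearOrder ι]
  (G : ι → Type) [∀ i, CommGroup (G i)] [∀ i, Fintype (G i)]
  (𝒯 : Type) [CommRing 𝒯] (p : ι → Polynomial 𝒯) (fr : ι → ∀ i, G i)

/-- Basis symbols `[a, y]` of the degree-`(−n)` component `ℒ_z^{−n} = ⨁_{deg y = n} 𝒜_{z/z(y)}[y]`
of Anderson's resolution: `y` a squarefree divisor of `z̄` of degree `n` and `a` a symbol
of `𝒜_{z/z(y)}` (a stalk disjoint from `y` together with a group element). -/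
def AndIdx (n : ℕ) : Type :=
  {t : Finset ι × UndIdx ι G // t.1.card = n ∧ Disjoint t.1 t.2.1.1}

/-- The differential `d [a,y] = ∑_{x∣y} ω(x,y) λ_{z(x)} [a, y/x]` of Anderson's
resolution, from the degree-`(−n−1)` component to the degree-`(−n)` component, where
`ω(x,y) = (−1)^{#{x'∣y : x'<x}}` and
`λ_{z(x)}[a] = p(x;Fr_x^{-1})[a] − N_{z(x)}[z(x)a]`. -/
noncomputable def andD (n : ℕ) :
    (AndIdx ι G (n + 1) →₀ 𝒯) →ₗ[𝒯] (AndIdx ι G n →₀ 𝒯) :=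
  Finsupp.lsum 𝒯 fun t => LinearMap.toSpanSingleton 𝒯 _
    (∑ x ∈ t.1.1.attach,
      ((-1 : ℤ) ^ ((t.1.1.filter (fun x' => x' < x.1)).card)) •
        ((∑ k ∈ (p x.1).support,
            Finsupp.single
              (⟨(t.1.1.erase x.1, undAct ι G (fun i => (fr x.1 i)⁻¹ ^ k) t.1.2), by
                refine ⟨?_, ?_⟩
                · simp [Finset.card_erase_of_mem x.2, t.2.1]
                · exact t.2.2.mono_left (Finset.erase_subset _ _)⟩ : AndIdx ι G n)
              ((p x.1).coeff k))
          - ∑ h : G x.1,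
              Finsupp.single
                (⟨(t.1.1.erase x.1, undExt ι G x.1 h t.1.2), by
                  refine ⟨?_, ?_⟩
                  · simp [Finset.card_erase_of_mem x.2, t.2.1]
                  · show Disjoint (t.1.1.erase x.1) (insert x.1 t.1.2.1.1)
                    rw [Finset.disjoint_insert_right]
                    exact ⟨Finset.notMem_erase _ _,
                      t.2.2.mono_left (Finset.erase_subset _ _)⟩⟩ : AndIdx ι G n)
                (1 : 𝒯)))

/-- The augmentation `u : ℒ_z^0 → 𝒰_z`, `[a, 1] ↦ [a]`. -/
noncomputable def andU : (AndIdx ι G 0 →₀ 𝒯) →ₗ[𝒯] UND ι G 𝒯 p fr :=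
  Finsupp.lsum 𝒯 fun t => LinearMap.toSpanSingleton 𝒯 _
    (Submodule.Quotient.mk (Finsupp.single t.1.2 (1 : 𝒯)))

end

section
variable (ι : Type) [Fintype ι] [LinearOrder ι]
  (G : ι → Type) [∀ i, CommGroup (G i)] [∀ i, Fintype (G i)]
  (𝒯 : Type) [CommRing 𝒯] (p : ι → Polynomial 𝒯) (fr : ι → ∀ i, G i)

/-- The piece `d_{1,x}[a,y] = −ω(x,y) N_{z(x)}[z(x)a, y/x]` of the differential of
Anderson's resolution (zero when `x ∤ y`). -/
noncomputable def andD1x (n : ℕ) (x : ι) :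
    (AndIdx ι G (n + 1) →₀ 𝒯) →ₗ[𝒯] (AndIdx ι G n →₀ 𝒯) :=
  Finsupp.lsum 𝒯 fun t => LinearMap.toSpanSingleton 𝒯 _
    (if hx : x ∈ t.1.1 then
      (-((-1 : ℤ) ^ ((t.1.1.filter (fun x' => x' < x)).card))) •
        ∑ h : G x,
          Finsupp.single
            (⟨(t.1.1.erase x, undExt ι G x h t.1.2), by
              refine ⟨?_, ?_⟩
              · simp [Finset.card_erase_of_mem hx, t.2.1]
              · show Disjoint (t.1.1.erase x) (insert x t.1.2.1.1)
                rw [Finset.disjoint_insert_right]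
                exact ⟨Finset.notMem_erase _ _,
                  t.2.2.mono_left (Finset.erase_subset _ _)⟩⟩ : AndIdx ι G n)
            (1 : 𝒯)
     else 0)

/-- The piece `d_{2,x}[a,y] = ω(x,y) p(x;Fr_x^{-1})[a, y/x]` of the differential of
Anderson's resolution (zero when `x ∤ y`). -/
noncomputable def andD2x (n : ℕ) (x : ι) :
    (AndIdx ι G (n + 1) →₀ 𝒯) →ₗ[𝒯] (AndIdx ι G n →₀ 𝒯) :=
  Finsupp.lsum 𝒯 fun t => LinearMap.toSpanSingleton 𝒯 _
    (if hx : x ∈ t.1.1 then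
      ((-1 : ℤ) ^ ((t.1.1.filter (fun x' => x' < x)).card)) •
        ∑ k ∈ (p x).support,
          Finsupp.single
            (⟨(t.1.1.erase x, undAct ι G (fun i => (fr x i)⁻¹ ^ k) t.1.2), by
              refine ⟨?_, ?_⟩
              · simp [Finset.card_erase_of_mem hx, t.2.1]
              · exact t.2.2.mono_left (Finset.erase_subset _ _)⟩ : AndIdx ι G n)
            ((p x).coeff k)
     else 0)

/-- The `G_z`-action on the degree-`(−n)` component of Anderson's resolution. -/
noncomputable def andActL (n : ℕ) (σ : ∀ i, G i) :
    (AndIdx ι G n →₀ 𝒯) →ₗ[𝒯] (AndIdx ι G n →₀ 𝒯) :=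
  Finsupp.lmapDomain 𝒯 𝒯
    (fun t => (⟨(t.1.1, undAct ι G σ t.1.2), ⟨t.2.1, t.2.2⟩⟩ : AndIdx ι G n))

end

/-! Each `d_{i,x}` is a combination of elementary lowerings `[a, y] ↦ ω(x,y) [φ a, y/x]`, where
`φ` is an extension `a ↦ h z(x) a` (for `d₁`, summed over `h ∈ G_{z(x)}`) or a translation by
`Fr_x^{-k}` (for `d₂`). Lowering twice at the same `x` gives zero because `x ∤ y/x`. For `x ≠ x'`
the signs satisfy `ω(x',y) ω(x,y/x') = −ω(x,y) ω(x',y/x)`, while extensions at distinct primes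
commute, translations commute, and a translation by `σ` turns `h z(x) a` into `(σ_x h) z(x) (σ a)`,
which only permutes the sum over `G_{z(x)}`. Hence all pieces anticommute pairwise and square to
zero, which gives `d₁² = d₂² = d₁d₂ + d₂d₁ = 0`; the same reindexing gives the equivariance. -/

section AnticommutingFamilies

variable {ι R M₁ M₂ M₃ : Type*} [Fintype ι] [Semiring R] [AddCommMonoid M₁] [AddCommMonoid M₂]
  [AddCommGroup M₃] [Module R M₁] [Module R M₂] [Module R M₃]

theorem sum_comp_sum_eq_zero_of_anticomm (a : ι → M₂ →ₗ[R] M₃) (b : ι → M₁ →ₗ[R] M₂)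
    (hself : ∀ x v, a x (b x v) = 0) (hanti : ∀ x x', x ≠ x' → ∀ v, a x (b x' v) = -a x' (b x v)) :
    (∑ x, a x).comp (∑ x, b x) = 0 := by
  refine LinearMap.ext fun v => ?_
  simp only [LinearMap.comp_apply, LinearMap.sum_apply, map_sum, LinearMap.zero_apply]
  rw [← Fintype.sum_prod_type']
  refine Finset.sum_ninvolution Prod.swap (fun q => ?_) (fun q hq hswap => hq ?_)
    (fun _ => Finset.mem_univ _) Prod.swap_swap
  · rcases eq_or_ne q.1 q.2 with h | h
    · simp only [Prod.fst_swap, Prod.snd_swap, h, hself, add_zero]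
    · rw [Prod.fst_swap, Prod.snd_swap, hanti _ _ h, add_neg_cancel]
  · rw [← congrArg Prod.snd hswap, Prod.snd_swap, hself]

theorem sum_comp_sum_add_sum_comp_sum_eq_zero (a c : ι → M₂ →ₗ[R] M₃) (b d : ι → M₁ →ₗ[R] M₂)
    (h : ∀ x x' v, a x (b x' v) = -c x' (d x v)) :
    (∑ x, a x).comp (∑ x, b x) + (∑ x, c x).comp (∑ x, d x) = 0 := by
  refine LinearMap.ext fun v => ?_
  simp only [LinearMap.add_apply, LinearMap.comp_apply, LinearMap.sum_apply, map_sum,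
    LinearMap.zero_apply, h, Finset.sum_neg_distrib]
  rw [Finset.sum_comm, neg_add_cancel]

end AnticommutingFamilies

/-- The sign `ω(x,y)`. -/
def andSign {α : Type*} [LinearOrder α] (y : Finset α) (x : α) : ℤ :=
  (-1) ^ (y.filter (· < x)).card

section Sign

variable {α : Type*} [LinearOrder α] {y : Finset α} {x x' : α}

theorem andSign_erase_of_le (h : x ≤ x') : andSign (y.erase x') x = andSign y x := by
  rw [andSign, andSign, Finset.filter_erase,
    Finset.erase_eq_of_notMem fun hx' => (Finset.mem_filter.1 hx').2.not_ge h]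

theorem andSign_erase_of_lt (hx : x ∈ y) (h : x < x') :
    andSign (y.erase x) x' = -andSign y x' := by
  rw [andSign, andSign, Finset.filter_erase,
    ← Finset.card_erase_add_one (Finset.mem_filter.2 ⟨hx, h⟩), pow_succ, mul_neg_one, neg_neg]

theorem andSign_mul_andSign_erase (hx : x ∈ y) (hx' : x' ∈ y) (hne : x ≠ x') :
    andSign y x' * andSign (y.erase x') x = -(andSign y x * andSign (y.erase x) x') := by
  rcases hne.lt_or_gt with h | h
  · rw [andSign_erase_of_le h.le, andSign_erase_of_lt hx h]
    ring
  · rw [andSign_erase_of_le h.le, andSign_erase_of_lt hx' h]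
    ring

end Sign

section Symbols

variable {ι : Type} [LinearOrder ι] {G : ι → Type} [∀ i, CommGroup (G i)]

theorem undExt_comm {x x' : ι} (hne : x ≠ x') (h : G x) (h' : G x') (q : UndIdx ι G) :
    undExt ι G x h (undExt ι G x' h' q) = undExt ι G x' h' (undExt ι G x h q) :=
  Subtype.ext (Prod.ext (Finset.insert_comm x x' q.1.1) (Function.update_comm hne h h' q.1.2).symm)

theorem undAct_comm (σ τ : ∀ i, G i) (q : UndIdx ι G) :
    undAct ι G σ (undAct ι G τ q) = undAct ι G τ (undAct ι G σ q) := by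
  refine Subtype.ext (Prod.ext rfl (funext fun i => ?_))
  by_cases hi : i ∈ q.1.1 <;> simp [undAct, hi, mul_left_comm]

theorem undExt_undAct (σ : ∀ i, G i) (x : ι) (h : G x) (q : UndIdx ι G) :
    undExt ι G x h (undAct ι G σ q) = undAct ι G σ (undExt ι G x ((σ x)⁻¹ * h) q) := by
  refine Subtype.ext (Prod.ext rfl (funext fun i => ?_))
  rcases eq_or_ne i x with rfl | hix
  · simp [undExt, undAct]
  · by_cases hi : i ∈ q.1.1 <;> simp [undExt, undAct, hi, hix]

theorem undExt_stalk_subset (x : ι) (h : G x) (q : UndIdx ι G) :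
    (undExt ι G x h q).1.1 ⊆ insert x q.1.1 :=
  subset_rfl

theorem undAct_stalk_subset (σ : ∀ i, G i) (x : ι) (q : UndIdx ι G) :
    (undAct ι G σ q).1.1 ⊆ insert x q.1.1 :=
  Finset.subset_insert x q.1.1

end Symbols

section Lowering

variable {ι : Type} [LinearOrder ι] {G : ι → Type} [∀ i, CommGroup (G i)]
  (𝒯 : Type) [CommRing 𝒯] {n : ℕ} {x x' : ι} {φ ψ φ' ψ' : UndIdx ι G → UndIdx ι G}

/-- `[a, y] ↦ [φ a, y/x]`; the hypothesis on `φ` (it enlarges the stalk at most by `x`) keeps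
the stalk disjoint from `y/x`. -/
def lowerIdx (x : ι) (φ : UndIdx ι G → UndIdx ι G) (hφ : ∀ a, (φ a).1.1 ⊆ insert x a.1.1)
    (t : AndIdx ι G (n + 1)) (hx : x ∈ t.1.1) : AndIdx ι G n :=
  ⟨(t.1.1.erase x, φ t.1.2), by simp [Finset.card_erase_of_mem hx, t.2.1],
    (Finset.disjoint_insert_right.2 ⟨Finset.notMem_erase x _,
      t.2.2.mono_left (Finset.erase_subset x _)⟩).mono_right (hφ _)⟩

@[simp]
theorem lowerIdx_fst (hφ : ∀ a, (φ a).1.1 ⊆ insert x a.1.1) (t : AndIdx ι G (n + 1))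
    (hx : x ∈ t.1.1) : (lowerIdx x φ hφ t hx).1.1 = t.1.1.erase x :=
  rfl

theorem lowerIdx_lowerIdx (hne : x ≠ x') (hcomm : ∀ a, φ (ψ a) = ψ' (φ' a))
    (hφ : ∀ a, (φ a).1.1 ⊆ insert x a.1.1) (hψ : ∀ a, (ψ a).1.1 ⊆ insert x' a.1.1)
    (hφ' : ∀ a, (φ' a).1.1 ⊆ insert x a.1.1) (hψ' : ∀ a, (ψ' a).1.1 ⊆ insert x' a.1.1)
    (t : AndIdx ι G (n + 2)) (hx : x ∈ t.1.1) (hx' : x' ∈ t.1.1) :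
    lowerIdx x φ hφ (lowerIdx x' ψ hψ t hx') (Finset.mem_erase.2 ⟨hne, hx⟩)
      = lowerIdx x' ψ' hψ' (lowerIdx x φ' hφ' t hx) (Finset.mem_erase.2 ⟨hne.symm, hx'⟩) :=
  Subtype.ext (Prod.ext Finset.erase_right_comm (hcomm _))

/-- `[a, y] ↦ ω(x,y) [φ a, y/x]`, and `0` when `x ∤ y`. -/
noncomputable def lowerBy (n : ℕ) (x : ι) (φ : UndIdx ι G → UndIdx ι G)
    (hφ : ∀ a, (φ a).1.1 ⊆ insert x a.1.1) :
    (AndIdx ι G (n + 1) →₀ 𝒯) →ₗ[𝒯] (AndIdx ι G n →₀ 𝒯) :=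
  Finsupp.lsum 𝒯 fun t => LinearMap.toSpanSingleton 𝒯 _
    (if hx : x ∈ t.1.1 then andSign t.1.1 x • Finsupp.single (lowerIdx x φ hφ t hx) 1 else 0)

variable {𝒯} in
theorem lowerBy_single_of_mem (hφ : ∀ a, (φ a).1.1 ⊆ insert x a.1.1) {t : AndIdx ι G (n + 1)}
    (hx : x ∈ t.1.1) (c : 𝒯) :
    lowerBy 𝒯 n x φ hφ (Finsupp.single t c)
      = andSign t.1.1 x • Finsupp.single (lowerIdx x φ hφ t hx) c := by
  rw [lowerBy, Finsupp.lsum_single, LinearMap.toSpanSingleton_apply, dif_pos hx, smul_comm,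
    Finsupp.smul_single, smul_eq_mul, mul_one]

variable {𝒯} in
theorem lowerBy_single_of_notMem (hφ : ∀ a, (φ a).1.1 ⊆ insert x a.1.1)
    {t : AndIdx ι G (n + 1)} (hx : x ∉ t.1.1) (c : 𝒯) :
    lowerBy 𝒯 n x φ hφ (Finsupp.single t c) = 0 := by
  rw [lowerBy, Finsupp.lsum_single, LinearMap.toSpanSingleton_apply, dif_neg hx, smul_zero]

variable {𝒯} in
theorem lowerBy_lowerBy_single_of_notMem (hφ : ∀ a, (φ a).1.1 ⊆ insert x a.1.1)
    (hψ : ∀ a, (ψ a).1.1 ⊆ insert x' a.1.1) {t : AndIdx ι G (n + 2)}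
    (hx : x' ∈ t.1.1 → x ∉ t.1.1.erase x') (c : 𝒯) :
    lowerBy 𝒯 n x φ hφ (lowerBy 𝒯 (n + 1) x' ψ hψ (Finsupp.single t c)) = 0 := by
  by_cases hx' : x' ∈ t.1.1
  · rw [lowerBy_single_of_mem hψ hx', map_zsmul, lowerBy_single_of_notMem hφ (hx hx'),
      smul_zero]
  · rw [lowerBy_single_of_notMem hψ hx', map_zero]

theorem lowerBy_lowerBy_self (hφ : ∀ a, (φ a).1.1 ⊆ insert x a.1.1)
    (hψ : ∀ a, (ψ a).1.1 ⊆ insert x a.1.1) (v : AndIdx ι G (n + 2) →₀ 𝒯) :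
    lowerBy 𝒯 n x φ hφ (lowerBy 𝒯 (n + 1) x ψ hψ v) = 0 := by
  induction v using Finsupp.induction_linear with
  | zero => simp
  | add v w hv hw => rw [map_add, map_add, hv, hw, add_zero]
  | single t c => exact lowerBy_lowerBy_single_of_notMem hφ hψ (fun _ => Finset.notMem_erase x _) c

theorem lowerBy_lowerBy_eq_neg (hne : x ≠ x') (hcomm : ∀ a, φ (ψ a) = ψ' (φ' a))
    (hφ : ∀ a, (φ a).1.1 ⊆ insert x a.1.1) (hψ : ∀ a, (ψ a).1.1 ⊆ insert x' a.1.1)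
    (hφ' : ∀ a, (φ' a).1.1 ⊆ insert x a.1.1) (hψ' : ∀ a, (ψ' a).1.1 ⊆ insert x' a.1.1)
    (v : AndIdx ι G (n + 2) →₀ 𝒯) :
    lowerBy 𝒯 n x φ hφ (lowerBy 𝒯 (n + 1) x' ψ hψ v)
      = -lowerBy 𝒯 n x' ψ' hψ' (lowerBy 𝒯 (n + 1) x φ' hφ' v) := by
  induction v using Finsupp.induction_linear with
  | zero => simp
  | add v w hv hw => rw [map_add, map_add, hv, hw, map_add, map_add, neg_add]
  | single t c =>
    by_cases hx : x ∈ t.1.1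
    · by_cases hx' : x' ∈ t.1.1
      · rw [lowerBy_single_of_mem hψ hx', map_zsmul,
          lowerBy_single_of_mem hφ (Finset.mem_erase.2 ⟨hne, hx⟩),
          lowerBy_single_of_mem hφ' hx, map_zsmul,
          lowerBy_single_of_mem hψ' (Finset.mem_erase.2 ⟨hne.symm, hx'⟩),
          smul_smul, smul_smul, lowerIdx_lowerIdx hne hcomm]
        simp only [lowerIdx_fst]
        rw [andSign_mul_andSign_erase hx hx' hne, neg_smul]
      · rw [lowerBy_lowerBy_single_of_notMem hφ hψ (absurd · hx'),
          lowerBy_lowerBy_single_of_notMem hψ' hφ' (fun _ h => hx' (Finset.mem_of_mem_erase h)),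
          neg_zero]
    · rw [lowerBy_lowerBy_single_of_notMem hφ hψ (fun _ h => hx (Finset.mem_of_mem_erase h)),
        lowerBy_lowerBy_single_of_notMem hψ' hφ' (absurd · hx), neg_zero]

variable {𝒯} in
theorem andActL_single (σ : ∀ i, G i) (t : AndIdx ι G n) (c : 𝒯) :
    andActL ι G 𝒯 n σ (Finsupp.single t c)
      = Finsupp.single ⟨(t.1.1, undAct ι G σ t.1.2), t.2⟩ c :=
  Finsupp.mapDomain_single

theorem lowerBy_andActL {σ : ∀ i, G i} (hcomm : ∀ a, φ (undAct ι G σ a) = undAct ι G σ (φ' a))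
    (hφ : ∀ a, (φ a).1.1 ⊆ insert x a.1.1) (hφ' : ∀ a, (φ' a).1.1 ⊆ insert x a.1.1)
    (v : AndIdx ι G (n + 1) →₀ 𝒯) :
    lowerBy 𝒯 n x φ hφ (andActL ι G 𝒯 (n + 1) σ v)
      = andActL ι G 𝒯 n σ (lowerBy 𝒯 n x φ' hφ' v) := by
  induction v using Finsupp.induction_linear with
  | zero => simp
  | add v w hv hw => simp only [map_add, hv, hw]
  | single t c =>
    rw [andActL_single]
    by_cases hx : x ∈ t.1.1
    · rw [lowerBy_single_of_mem hφ (t := ⟨(t.1.1, undAct ι G σ t.1.2), t.2⟩) hx,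
        lowerBy_single_of_mem hφ' hx, map_zsmul, andActL_single]
      exact congrArg _ (congrArg₂ _ (Subtype.ext (Prod.ext rfl (hcomm _))) rfl)
    · rw [lowerBy_single_of_notMem hφ (t := ⟨(t.1.1, undAct ι G σ t.1.2), t.2⟩) hx,
        lowerBy_single_of_notMem hφ' hx, map_zero]

end Lowering

section Pieces

variable {ι : Type} [LinearOrder ι] {G : ι → Type} [∀ i, CommGroup (G i)]
  {𝒯 : Type} [CommRing 𝒯]

-- Unfolding `andD1x`, `andD2x`, `andD` exposes terms that typecheck only after unfolding `UndIdx`,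
-- on which `rw` and `simp` fail to match; these restatements through `lowerIdx` avoid that.
theorem andD1x_eq_lsum [∀ i, Fintype (G i)] (n : ℕ) (x : ι) :
    andD1x ι G 𝒯 n x = Finsupp.lsum 𝒯 fun t => LinearMap.toSpanSingleton 𝒯 _
      (if hx : x ∈ t.1.1 then
        -andSign t.1.1 x • ∑ h : G x,
          Finsupp.single (lowerIdx x (undExt ι G x h) (undExt_stalk_subset x h) t hx) 1
      else 0) :=
  rfl

theorem andD2x_eq_lsum (p : ι → Polynomial 𝒯) (fr : ι → ∀ i, G i) (n : ℕ) (x : ι) :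
    andD2x ι G 𝒯 p fr n x = Finsupp.lsum 𝒯 fun t => LinearMap.toSpanSingleton 𝒯 _
      (if hx : x ∈ t.1.1 then
        andSign t.1.1 x • ∑ k ∈ (p x).support,
          Finsupp.single (lowerIdx x (undAct ι G fun i => (fr x i)⁻¹ ^ k)
            (undAct_stalk_subset _ x) t hx) ((p x).coeff k)
      else 0) :=
  rfl

theorem andD_eq_lsum [∀ i, Fintype (G i)] (p : ι → Polynomial 𝒯) (fr : ι → ∀ i, G i) (n : ℕ) :
    andD ι G 𝒯 p fr n = Finsupp.lsum 𝒯 fun t => LinearMap.toSpanSingleton 𝒯 _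
      (∑ x ∈ t.1.1.attach, andSign t.1.1 x.1 •
        ((∑ k ∈ (p x.1).support,
            Finsupp.single (lowerIdx x.1 (undAct ι G fun i => (fr x.1 i)⁻¹ ^ k)
              (undAct_stalk_subset _ x.1) t x.2) ((p x.1).coeff k))
          - ∑ h : G x.1,
            Finsupp.single
              (lowerIdx x.1 (undExt ι G x.1 h) (undExt_stalk_subset x.1 h) t x.2) 1)) :=
  rfl

theorem andD1x_eq_neg_sum_lowerBy [∀ i, Fintype (G i)] (n : ℕ) (x : ι) :
    andD1x ι G 𝒯 n x = -∑ h : G x, lowerBy 𝒯 n x (undExt ι G x h) (undExt_stalk_subset x h) := by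
  refine Finsupp.lhom_ext fun t c => ?_
  rw [andD1x_eq_lsum, Finsupp.lsum_single, LinearMap.toSpanSingleton_apply, LinearMap.neg_apply,
    LinearMap.sum_apply]
  by_cases hx : x ∈ t.1.1
  · simp only [dif_pos hx, lowerBy_single_of_mem _ hx c, neg_smul, smul_neg, Finset.smul_sum]
    rw [Finset.sum_neg_distrib]
    simp only [smul_comm c (andSign _ x), Finsupp.smul_single, smul_eq_mul, mul_one]
  · simp only [dif_neg hx, lowerBy_single_of_notMem _ hx c, smul_zero, Finset.sum_const_zero,
      neg_zero]

theorem andD2x_eq_sum_lowerBy (p : ι → Polynomial 𝒯) (fr : ι → ∀ i, G i) (n : ℕ) (x : ι) :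
    andD2x ι G 𝒯 p fr n x = ∑ k ∈ (p x).support, (p x).coeff k •
      lowerBy 𝒯 n x (undAct ι G fun i => (fr x i)⁻¹ ^ k) (undAct_stalk_subset _ x) := by
  refine Finsupp.lhom_ext fun t c => ?_
  rw [andD2x_eq_lsum, Finsupp.lsum_single, LinearMap.toSpanSingleton_apply, LinearMap.sum_apply]
  by_cases hx : x ∈ t.1.1
  · simp only [dif_pos hx, LinearMap.smul_apply, lowerBy_single_of_mem _ hx c, Finset.smul_sum]
    refine Finset.sum_congr rfl fun k _ => ?_
    simp only [Finsupp.smul_single, smul_eq_mul, mul_comm c, smul_mul_assoc, mul_smul_comm]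
  · simp only [dif_neg hx, LinearMap.smul_apply, lowerBy_single_of_notMem _ hx c, smul_zero,
      Finset.sum_const_zero]

theorem andD_eq_sum_andD1x_add_sum_andD2x [Fintype ι] [∀ i, Fintype (G i)]
    (p : ι → Polynomial 𝒯) (fr : ι → ∀ i, G i) (n : ℕ) :
    andD ι G 𝒯 p fr n = ∑ x : ι, andD1x ι G 𝒯 n x + ∑ x : ι, andD2x ι G 𝒯 p fr n x := by
  refine Finsupp.lhom_ext fun t c => ?_
  simp only [andD_eq_lsum, andD1x_eq_lsum, andD2x_eq_lsum, LinearMap.add_apply,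
    LinearMap.sum_apply, Finsupp.lsum_single, LinearMap.toSpanSingleton_apply, ← Finset.smul_sum,
    ← smul_add]
  rw [Finset.sum_attach_eq_sum_dite, ← Finset.sum_add_distrib]
  refine congrArg _ (Finset.sum_congr rfl fun x _ => ?_)
  split_ifs
  · rw [smul_sub, sub_eq_neg_add, neg_smul]
  · rw [add_zero]

variable {n : ℕ} {x x' : ι}

theorem sum_lowerBy_undExt_lowerBy_undAct_eq_neg [Fintype (G x)] (hne : x ≠ x') (σ : ∀ i, G i)
    (v : AndIdx ι G (n + 2) →₀ 𝒯) :
    ∑ h : G x, lowerBy 𝒯 n x (undExt ι G x h) (undExt_stalk_subset x h)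
        (lowerBy 𝒯 (n + 1) x' (undAct ι G σ) (undAct_stalk_subset σ x') v)
      = -∑ h : G x, lowerBy 𝒯 n x' (undAct ι G σ) (undAct_stalk_subset σ x')
        (lowerBy 𝒯 (n + 1) x (undExt ι G x h) (undExt_stalk_subset x h) v) := by
  rw [← Finset.sum_neg_distrib]
  refine (Finset.sum_congr rfl fun h _ =>
    lowerBy_lowerBy_eq_neg 𝒯 hne (undExt_undAct σ x h) _ _ (undExt_stalk_subset x _)
      (undAct_stalk_subset σ x') v).trans ?_
  exact Fintype.sum_equiv (Equiv.mulLeft (σ x)⁻¹) _ _ fun h => rfl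

theorem andD1x_andD1x_self [∀ i, Fintype (G i)] (x : ι) (v : AndIdx ι G (n + 2) →₀ 𝒯) :
    andD1x ι G 𝒯 n x (andD1x ι G 𝒯 (n + 1) x v) = 0 := by
  simp only [andD1x_eq_neg_sum_lowerBy, LinearMap.neg_apply, LinearMap.sum_apply, map_neg,
    map_sum, lowerBy_lowerBy_self, Finset.sum_const_zero, neg_zero]

theorem andD2x_andD2x_self (p : ι → Polynomial 𝒯) (fr : ι → ∀ i, G i) (x : ι)
    (v : AndIdx ι G (n + 2) →₀ 𝒯) :
    andD2x ι G 𝒯 p fr n x (andD2x ι G 𝒯 p fr (n + 1) x v) = 0 := by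
  simp only [andD2x_eq_sum_lowerBy, LinearMap.smul_apply, LinearMap.sum_apply, map_smul,
    map_sum, lowerBy_lowerBy_self, smul_zero, Finset.sum_const_zero]

theorem andD1x_andD1x_eq_neg [∀ i, Fintype (G i)] (hne : x ≠ x') (v : AndIdx ι G (n + 2) →₀ 𝒯) :
    andD1x ι G 𝒯 n x (andD1x ι G 𝒯 (n + 1) x' v)
      = -andD1x ι G 𝒯 n x' (andD1x ι G 𝒯 (n + 1) x v) := by
  simp only [andD1x_eq_neg_sum_lowerBy, LinearMap.neg_apply, LinearMap.sum_apply, map_neg,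
    map_sum, neg_neg, Finset.sum_neg_distrib, lowerBy_lowerBy_eq_neg 𝒯 hne (undExt_comm hne _ _)
      _ _ (undExt_stalk_subset x _) (undExt_stalk_subset x' _)]
  rw [Finset.sum_comm]

theorem andD2x_andD2x_eq_neg (p : ι → Polynomial 𝒯) (fr : ι → ∀ i, G i) (hne : x ≠ x')
    (v : AndIdx ι G (n + 2) →₀ 𝒯) :
    andD2x ι G 𝒯 p fr n x (andD2x ι G 𝒯 p fr (n + 1) x' v)
      = -andD2x ι G 𝒯 p fr n x' (andD2x ι G 𝒯 p fr (n + 1) x v) := by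
  simp only [andD2x_eq_sum_lowerBy, LinearMap.smul_apply, LinearMap.sum_apply, map_smul,
    map_sum, lowerBy_lowerBy_eq_neg 𝒯 hne (undAct_comm _ _) _ _ (undAct_stalk_subset _ x)
      (undAct_stalk_subset _ x'), smul_neg, Finset.sum_neg_distrib,
    Finset.smul_sum]
  rw [Finset.sum_comm]
  simp only [smul_comm ((p x).coeff _) ((p x').coeff _)]

theorem andD1x_andD2x_eq_neg [∀ i, Fintype (G i)] (p : ι → Polynomial 𝒯) (fr : ι → ∀ i, G i)
    (x x' : ι) (v : AndIdx ι G (n + 2) →₀ 𝒯) :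
    andD1x ι G 𝒯 n x (andD2x ι G 𝒯 p fr (n + 1) x' v)
      = -andD2x ι G 𝒯 p fr n x' (andD1x ι G 𝒯 (n + 1) x v) := by
  rcases eq_or_ne x x' with rfl | hne
  · simp only [andD1x_eq_neg_sum_lowerBy, andD2x_eq_sum_lowerBy, LinearMap.neg_apply,
      LinearMap.smul_apply, LinearMap.sum_apply, map_neg, map_smul, map_sum,
      lowerBy_lowerBy_self, smul_zero, Finset.sum_const_zero, neg_zero]
  · simp only [andD1x_eq_neg_sum_lowerBy, andD2x_eq_sum_lowerBy, LinearMap.neg_apply,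
      LinearMap.smul_apply, LinearMap.sum_apply, map_neg, map_smul, map_sum, smul_neg,
      Finset.sum_neg_distrib, neg_neg]
    rw [Finset.sum_comm]
    simp only [← Finset.smul_sum, sum_lowerBy_undExt_lowerBy_undAct_eq_neg hne, smul_neg,
      Finset.sum_neg_distrib, neg_neg]

theorem andD1x_andActL [∀ i, Fintype (G i)] (x : ι) (σ : ∀ i, G i)
    (v : AndIdx ι G (n + 1) →₀ 𝒯) :
    andD1x ι G 𝒯 n x (andActL ι G 𝒯 (n + 1) σ v) = andActL ι G 𝒯 n σ (andD1x ι G 𝒯 n x v) := by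
  simp only [andD1x_eq_neg_sum_lowerBy, LinearMap.neg_apply, LinearMap.sum_apply, map_neg,
    map_sum]
  refine congrArg _ ((Finset.sum_congr rfl fun h _ =>
    lowerBy_andActL 𝒯 (undExt_undAct σ x h) _ (undExt_stalk_subset x _) v).trans ?_)
  exact Fintype.sum_equiv (Equiv.mulLeft (σ x)⁻¹) _ _ fun h => rfl

theorem andD2x_andActL (p : ι → Polynomial 𝒯) (fr : ι → ∀ i, G i) (x : ι) (σ : ∀ i, G i)
    (v : AndIdx ι G (n + 1) →₀ 𝒯) :
    andD2x ι G 𝒯 p fr n x (andActL ι G 𝒯 (n + 1) σ v)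
      = andActL ι G 𝒯 n σ (andD2x ι G 𝒯 p fr n x v) := by
  simp only [andD2x_eq_sum_lowerBy, LinearMap.smul_apply, LinearMap.sum_apply, map_smul,
    map_sum, lowerBy_andActL 𝒯 (undAct_comm _ σ) _ (undAct_stalk_subset _ x)]

end Pieces

/-- decomposing the differential of Anderson's resolution as
`d = d₁ + d₂` with `d_{1,x}[a,y] = −ω(x,y) N_{z(x)}[z(x)a, y/x]` and
`d_{2,x}[a,y] = ω(x,y) p(x;Fr_x^{-1})[a, y/x]`, one has
`d₁² = d₂² = d₁d₂ + d₂d₁ = 0`, so `(ℒ_z; d₁, d₂)` is a double complex, and each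
`d_{i,x}` commutes with the `G_z`-action. -/
theorem stmt15 (ι : Type) [Fintype ι] [LinearOrder ι]
    (G : ι → Type) [∀ i, CommGroup (G i)] [∀ i, Fintype (G i)]
    (𝒯 : Type) [CommRing 𝒯] (p : ι → Polynomial 𝒯) (fr : ι → ∀ i, G i) :
    (∀ n : ℕ, andD ι G 𝒯 p fr n
        = (∑ x : ι, andD1x ι G 𝒯 n x) + (∑ x : ι, andD2x ι G 𝒯 p fr n x)) ∧
      (∀ n : ℕ,
        (∑ x : ι, andD1x ι G 𝒯 n x).comp (∑ x : ι, andD1x ι G 𝒯 (n + 1) x) = 0 ∧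
        (∑ x : ι, andD2x ι G 𝒯 p fr n x).comp
            (∑ x : ι, andD2x ι G 𝒯 p fr (n + 1) x) = 0 ∧
        (∑ x : ι, andD1x ι G 𝒯 n x).comp (∑ x : ι, andD2x ι G 𝒯 p fr (n + 1) x)
            + (∑ x : ι, andD2x ι G 𝒯 p fr n x).comp
                (∑ x : ι, andD1x ι G 𝒯 (n + 1) x) = 0) ∧
      (∀ (n : ℕ) (x : ι) (σ : ∀ i, G i),
        (andD1x ι G 𝒯 n x).comp (andActL ι G 𝒯 (n + 1) σ)
            = (andActL ι G 𝒯 n σ).comp (andD1x ι G 𝒯 n x) ∧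
        (andD2x ι G 𝒯 p fr n x).comp (andActL ι G 𝒯 (n + 1) σ)
            = (andActL ι G 𝒯 n σ).comp (andD2x ι G 𝒯 p fr n x)) := by
  refine ⟨andD_eq_sum_andD1x_add_sum_andD2x p fr, fun n => ⟨?_, ?_, ?_⟩,
    fun n x σ => ⟨LinearMap.ext (andD1x_andActL x σ), LinearMap.ext (andD2x_andActL p fr x σ)⟩⟩
  · exact sum_comp_sum_eq_zero_of_anticomm _ _ andD1x_andD1x_self fun _ _ => andD1x_andD1x_eq_neg
  · exact sum_comp_sum_eq_zero_of_anticomm _ _ (andD2x_andD2x_self p fr)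
      fun _ _ => andD2x_andD2x_eq_neg p fr
  · exact sum_comp_sum_add_sum_comp_sum_eq_zero _ _ _ _ (andD1x_andD2x_eq_neg p fr)
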